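/- arXiv:2601.16812 — 2 statements merged into one kernel-verified Lean document; each statement's English description precedes it below -/
import Mathlib

section
/- Let φ_j : ℝⁿ → ℝ, j = 1,…,N, be differentiable and set φ(x) = (1/N)·Σ_{j=1}^N φ_j(x). Assume φ is L-smooth, φ(x) ≥ φ* for all x ∈ ℝⁿ, and the Strong Growth Condition holds with constant ρ > 0. Fix z⁰ ∈ ℝⁿ and η = 1/(ρ·L), and for each index sequence σ : {0,…,T−1} → {1,…,N} define the SGD trajectory z_σ(0) = z⁰, z_σ(t+1) = z_σ(t) − η·∇φ_{σ(t)}(z_σ(t)). Let ε > 0. If T is a positive integer with T ≥ 2·ρ·L·(φ(z⁰) − φ*)/ε², then the expected gradient norm of an iterate drawn uniformly at random from the first T iterates satisfies N^{−T}·Σ_σ (1/T)·Σ_{t=0}^{T−1} ‖∇φ(z_σ(t))‖ ≤ ε. -/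
/-! By the descent lemma and the strong growth condition, one SGD step with `η = 1/(ρL)`
decreases `Φ`, on average over the sampled index, by at least `‖∇Φ‖² / (2ρL)`. The `t`-th iterate
does not depend on `σ t`, so averaging over all index sequences and telescoping gives
`∑ₜ 𝔼 ‖∇Φ(zₜ)‖² ≤ 2ρL (Φ z⁰ - φ*) ≤ T ε²`; Cauchy–Schwarz turns this bound on the mean square
into the bound `ε` on the mean. -/

/-- SGD trajectory: `z 0 = z0`, `z (t+1) = z t - η • ∇φ_{σ t} (z t)`. -/
noncomputable def sgdTraj {n N : ℕ} (φ : Fin N → EuclideanSpace ℝ (Fin n) → ℝ)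
    (η : ℝ) (z0 : EuclideanSpace ℝ (Fin n)) (σ : ℕ → Fin N) :
    ℕ → EuclideanSpace ℝ (Fin n)
  | 0 => z0
  | t + 1 => sgdTraj φ η z0 σ t - η • gradient (φ (σ t)) (sgdTraj φ η z0 σ t)

open Finset InnerProductSpace

theorem Fintype.card_smul_sum_apply_self {ι α M : Type*} [Fintype ι] [DecidableEq ι] [Fintype α]
    [AddCommMonoid M] (i : ι) (g : (ι → α) → α → M)
    (hg : ∀ σ a b, g (Function.update σ i a) b = g σ b) :
    Fintype.card α • ∑ σ, g σ (σ i) = ∑ σ, ∑ a, g σ a := by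
  -- `(σ, a) ↦ (σ[i ↦ a], σ i)` is an involution of `(ι → α) × α`.
  let e : Equiv.Perm ((ι → α) × α) := Function.Involutive.toPerm
    (fun p => (Function.update p.1 i p.2, p.1 i)) (fun p => by simp)
  have he : ∀ p, e p = (Function.update p.1 i p.2, p.1 i) := fun _ => rfl
  calc Fintype.card α • ∑ σ, g σ (σ i) = ∑ p, g (e p).1 (e p).2 := by
        simp [he, hg, Fintype.sum_prod_type, Finset.smul_sum]
    _ = ∑ σ, ∑ a, g σ a := (Equiv.sum_comp e fun p => g p.1 p.2).trans (Fintype.sum_prod_type _)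

section Gradient

variable {E : Type*} [NormedAddCommGroup E] [InnerProductSpace ℝ E] [CompleteSpace E]

theorem le_add_inner_gradient_add_sq {f : E → ℝ} (hf : Differentiable ℝ f) {L : ℝ}
    (hLip : ∀ x y, ‖gradient f x - gradient f y‖ ≤ L * ‖x - y‖) (x y : E) :
    f y ≤ f x + ⟪gradient f x, y - x⟫_ℝ + L / 2 * ‖y - x‖ ^ 2 := by
  set v := y - x
  -- The claim is `g 1 ≤ g 0`, and `g` is antitone on `[0, ∞)` by the Lipschitz bound on `∇f`.
  let g : ℝ → ℝ := fun s => f (x + s • v) - s * ⟪gradient f x, v⟫_ℝ - L / 2 * s ^ 2 * ‖v‖ ^ 2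
  have hderiv : ∀ s,
      HasDerivAt g (⟪gradient f (x + s • v) - gradient f x, v⟫_ℝ - L * s * ‖v‖ ^ 2) s := by
    intro s
    have hline : HasDerivAt (fun s : ℝ => x + s • v) v s := by
      simpa using ((hasDerivAt_id s).smul_const v).const_add x
    refine ((((hf _).hasFDerivAt.comp_hasDerivAt s hline).sub
      ((hasDerivAt_id s).mul_const ⟪gradient f x, v⟫_ℝ)).sub
      (((hasDerivAt_pow 2 s).const_mul (L / 2)).mul_const (‖v‖ ^ 2))).congr_deriv ?_
    rw [inner_sub_left, inner_gradient_left, inner_gradient_left]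
    simp only [Nat.cast_ofNat]
    ring
  have hderiv_nonpos : ∀ s ∈ interior (Set.Ici (0 : ℝ)),
      ⟪gradient f (x + s • v) - gradient f x, v⟫_ℝ - L * s * ‖v‖ ^ 2 ≤ 0 := by
    intro s hs
    rw [interior_Ici, Set.mem_Ioi] at hs
    have : ‖gradient f (x + s • v) - gradient f x‖ ≤ L * (s * ‖v‖) := by
      simpa [norm_smul, abs_of_pos hs] using hLip (x + s • v) x
    nlinarith [real_inner_le_norm (gradient f (x + s • v) - gradient f x) v, norm_nonneg v]
  have hanti := antitoneOn_of_hasDerivWithinAt_nonpos (convex_Ici 0)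
    (fun s _ => (hderiv s).continuousAt.continuousWithinAt)
    (fun s _ => (hderiv s).hasDerivWithinAt) hderiv_nonpos
  have := hanti Set.self_mem_Ici (show (1 : ℝ) ∈ Set.Ici 0 by norm_num) zero_le_one
  simp only [g, zero_smul, add_zero, one_smul, add_sub_cancel, v] at this
  linarith

theorem gradient_const_mul_sum {ι : Type*} (s : Finset ι) (c : ℝ) {φ : ι → E → ℝ} {x : E}
    (hφ : ∀ j, DifferentiableAt ℝ (φ j) x) :
    gradient (fun x => c * ∑ j ∈ s, φ j x) x = c • ∑ j ∈ s, gradient (φ j) x := by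
  have h : HasFDerivAt (fun x => c * ∑ j ∈ s, φ j x) (c • ∑ j ∈ s, fderiv ℝ (φ j) x) x :=
    (HasFDerivAt.fun_sum fun j _ => (hφ j).hasFDerivAt).const_mul c
  rw [h.hasGradientAt.gradient, map_smul, map_sum]
  rfl

variable {N : ℕ} {φ : Fin N → E → ℝ} {Φ : E → ℝ}

theorem sum_inner_gradient_eq (hφ : ∀ j, Differentiable ℝ (φ j))
    (hΦ : Φ = fun x => (1 / N : ℝ) * ∑ j, φ j x) (x : E) :
    ∑ j, ⟪gradient Φ x, gradient (φ j) x⟫_ℝ = N * ‖gradient Φ x‖ ^ 2 := by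
  rcases eq_or_ne N 0 with rfl | hN
  · simp
  have hsum : ∑ j, gradient (φ j) x = (N : ℝ) • gradient Φ x := by
    rw [hΦ, gradient_const_mul_sum _ _ fun j => (hφ j) x, smul_smul,
      mul_one_div_cancel (Nat.cast_ne_zero.2 hN), one_smul]
  rw [← inner_sum, hsum, real_inner_smul_right, real_inner_self_eq_norm_sq]

theorem sum_sgd_step_le (hφ : ∀ j, Differentiable ℝ (φ j))
    (hΦ : Φ = fun x => (1 / N : ℝ) * ∑ j, φ j x) {L : ℝ} (hL : 0 ≤ L)
    (hLip : ∀ x y, ‖gradient Φ x - gradient Φ y‖ ≤ L * ‖x - y‖) {ρ : ℝ}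
    (hSGC : ∀ x, (1 / N : ℝ) * ∑ j, ‖gradient (φ j) x‖ ^ 2 ≤ ρ * ‖gradient Φ x‖ ^ 2)
    (η : ℝ) (x : E) :
    ∑ j, Φ (x - η • gradient (φ j) x) ≤
      N * (Φ x - η * (1 - L * ρ * η / 2) * ‖gradient Φ x‖ ^ 2) := by
  have hΦdiff : Differentiable ℝ Φ := hΦ ▸ (Differentiable.fun_sum fun j _ => hφ j).const_mul _
  have hstep : ∀ j, Φ (x - η • gradient (φ j) x) ≤ Φ x
      - η * ⟪gradient Φ x, gradient (φ j) x⟫_ℝ + L / 2 * η ^ 2 * ‖gradient (φ j) x‖ ^ 2 := by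
    intro j
    have := le_add_inner_gradient_add_sq hΦdiff hLip x (x - η • gradient (φ j) x)
    rwa [sub_sub_cancel_left, inner_neg_right, real_inner_smul_right, norm_neg, norm_smul,
      mul_pow, Real.norm_eq_abs, sq_abs, ← sub_eq_add_neg, ← mul_assoc] at this
  have hvar : ∑ j, ‖gradient (φ j) x‖ ^ 2 ≤ N * (ρ * ‖gradient Φ x‖ ^ 2) := by
    rcases eq_or_ne N 0 with rfl | hN
    · simp
    have := hSGC x
    rwa [one_div, inv_mul_le_iff₀ (by positivity)] at this
  calc ∑ j, Φ (x - η • gradient (φ j) x)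
      ≤ ∑ j, (Φ x - η * ⟪gradient Φ x, gradient (φ j) x⟫_ℝ
          + L / 2 * η ^ 2 * ‖gradient (φ j) x‖ ^ 2) := Finset.sum_le_sum fun j _ => hstep j
    _ = N * Φ x - η * (N * ‖gradient Φ x‖ ^ 2)
          + L / 2 * η ^ 2 * ∑ j, ‖gradient (φ j) x‖ ^ 2 := by
        rw [Finset.sum_add_distrib, Finset.sum_sub_distrib, ← Finset.mul_sum, ← Finset.mul_sum,
          sum_inner_gradient_eq hφ hΦ, Finset.sum_const, Finset.card_univ, Fintype.card_fin,
          nsmul_eq_mul]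
    _ ≤ N * Φ x - η * (N * ‖gradient Φ x‖ ^ 2)
          + L / 2 * η ^ 2 * (N * (ρ * ‖gradient Φ x‖ ^ 2)) := by
        gcongr
    _ = N * (Φ x - η * (1 - L * ρ * η / 2) * ‖gradient Φ x‖ ^ 2) := by ring

end Gradient

theorem Finset.sum_le_card_mul_of_sum_sq_le {ι : Type*} (s : Finset ι) (f : ι → ℝ) {ε : ℝ}
    (hε : 0 ≤ ε) (h : ∑ i ∈ s, f i ^ 2 ≤ #s * ε ^ 2) : ∑ i ∈ s, f i ≤ #s * ε := by
  refine le_of_sq_le_sq ?_ (by positivity)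
  calc (∑ i ∈ s, f i) ^ 2 ≤ #s * ∑ i ∈ s, f i ^ 2 := sq_sum_le_card_mul_sum_sq
    _ ≤ #s * (#s * ε ^ 2) := by gcongr
    _ = (#s * ε) ^ 2 := by ring

theorem Finset.sum_range_le_sub_of_le_sub {S Q : ℕ → ℝ} {T : ℕ}
    (h : ∀ t < T, S (t + 1) ≤ S t - Q t) : ∑ t ∈ range T, Q t ≤ S 0 - S T := by
  rw [← Finset.sum_range_sub']
  exact Finset.sum_le_sum fun t ht => by linarith [h t (Finset.mem_range.1 ht)]

section Trajectory

variable {n N : ℕ} {φ : Fin N → EuclideanSpace ℝ (Fin n) → ℝ} {η : ℝ}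
  {z0 : EuclideanSpace ℝ (Fin n)}

theorem sgdTraj_congr {σ σ' : ℕ → Fin N} {t : ℕ} (h : ∀ s < t, σ s = σ' s) :
    sgdTraj φ η z0 σ t = sgdTraj φ η z0 σ' t := by
  induction t with
  | zero => rfl
  | succ t ih =>
    rw [sgdTraj, sgdTraj, ih fun s hs => h s (by omega), h t t.lt_succ_self]

def extendSeq {T : ℕ} (j₀ : Fin N) (σ : Fin T → Fin N) (s : ℕ) : Fin N :=
  if h : s < T then σ ⟨s, h⟩ else j₀

theorem extendSeq_of_lt {T : ℕ} (j₀ : Fin N) (σ : Fin T → Fin N) {s : ℕ} (hs : s < T) :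
    extendSeq j₀ σ s = σ ⟨s, hs⟩ :=
  dif_pos hs

theorem sgdTraj_extendSeq_update {T t : ℕ} (ht : t < T) (j₀ a : Fin N) (σ : Fin T → Fin N) :
    sgdTraj φ η z0 (extendSeq j₀ (Function.update σ ⟨t, ht⟩ a)) t =
      sgdTraj φ η z0 (extendSeq j₀ σ) t := by
  refine sgdTraj_congr fun s hs => ?_
  rw [extendSeq_of_lt _ _ (hs.trans ht), extendSeq_of_lt _ _ (hs.trans ht),
    Function.update_of_ne (Fin.ne_of_val_ne hs.ne)]

variable {Φ : EuclideanSpace ℝ (Fin n) → ℝ} {L ρ : ℝ}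

theorem sum_sgdTraj_succ_le (hφ : ∀ j, Differentiable ℝ (φ j))
    (hΦ : Φ = fun x => (1 / N : ℝ) * ∑ j, φ j x) (hL : 0 ≤ L)
    (hLip : ∀ x y, ‖gradient Φ x - gradient Φ y‖ ≤ L * ‖x - y‖)
    (hSGC : ∀ x, (1 / N : ℝ) * ∑ j, ‖gradient (φ j) x‖ ^ 2 ≤ ρ * ‖gradient Φ x‖ ^ 2)
    {T t : ℕ} (ht : t < T) (j₀ : Fin N) :
    ∑ σ : Fin T → Fin N, Φ (sgdTraj φ η z0 (extendSeq j₀ σ) (t + 1)) ≤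
      ∑ σ : Fin T → Fin N, (Φ (sgdTraj φ η z0 (extendSeq j₀ σ) t) -
        η * (1 - L * ρ * η / 2) * ‖gradient Φ (sgdTraj φ η z0 (extendSeq j₀ σ) t)‖ ^ 2) := by
  set Z := fun σ : Fin T → Fin N => sgdTraj φ η z0 (extendSeq j₀ σ) t
  -- The iterate at time `t` does not depend on `σ t`, so summing over `σ t` is summing over `j`.
  have hcount := Fintype.card_smul_sum_apply_self ⟨t, ht⟩
    (fun σ j => Φ (Z σ - η • gradient (φ j) (Z σ)))
    fun σ a b => by simp only [Z, sgdTraj_extendSeq_update]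
  rw [Fintype.card_fin, nsmul_eq_mul] at hcount
  refine le_of_mul_le_mul_left ?_ (Nat.cast_pos.2 j₀.pos)
  calc (N : ℝ) * ∑ σ : Fin T → Fin N, Φ (sgdTraj φ η z0 (extendSeq j₀ σ) (t + 1))
      = ∑ σ, ∑ j, Φ (Z σ - η • gradient (φ j) (Z σ)) := by
        rw [← hcount]
        simp only [sgdTraj, extendSeq_of_lt j₀ _ ht, Z]
    _ ≤ ∑ σ, N * (Φ (Z σ) - η * (1 - L * ρ * η / 2) * ‖gradient Φ (Z σ)‖ ^ 2) :=
        Finset.sum_le_sum fun σ _ => sum_sgd_step_le hφ hΦ hL hLip hSGC η (Z σ)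
    _ = _ := by rw [Finset.mul_sum]

theorem sum_range_sum_norm_gradient_sgdTraj_sq_le (hφ : ∀ j, Differentiable ℝ (φ j))
    (hΦ : Φ = fun x => (1 / N : ℝ) * ∑ j, φ j x) (hL : 0 < L)
    (hLip : ∀ x y, ‖gradient Φ x - gradient Φ y‖ ≤ L * ‖x - y‖)
    {φstar : ℝ} (hbound : ∀ x, φstar ≤ Φ x) (hρ : 0 < ρ)
    (hSGC : ∀ x, (1 / N : ℝ) * ∑ j, ‖gradient (φ j) x‖ ^ 2 ≤ ρ * ‖gradient Φ x‖ ^ 2)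
    (hη : η = 1 / (ρ * L)) (j₀ : Fin N) (T : ℕ) :
    ∑ t ∈ range T, ∑ σ : Fin T → Fin N, ‖gradient Φ (sgdTraj φ η z0 (extendSeq j₀ σ) t)‖ ^ 2 ≤
      2 * ρ * L * (N ^ T * (Φ z0 - φstar)) := by
  set Z := fun (σ : Fin T → Fin N) t => sgdTraj φ η z0 (extendSeq j₀ σ) t
  have hρL : 0 < ρ * L := mul_pos hρ hL
  have hrate : η * (1 - L * ρ * η / 2) = 1 / (2 * ρ * L) := by
    rw [hη]; field_simp; ring
  have hdescent : ∀ t < T, ∑ σ, Φ (Z σ (t + 1)) ≤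
      ∑ σ, Φ (Z σ t) - 1 / (2 * ρ * L) * ∑ σ, ‖gradient Φ (Z σ t)‖ ^ 2 := fun t ht => by
    have := sum_sgdTraj_succ_le hφ hΦ hL.le hLip hSGC (η := η) (z0 := z0) ht j₀
    rwa [Finset.sum_sub_distrib, ← Finset.mul_sum, hrate] at this
  have htel := Finset.sum_range_le_sub_of_le_sub (S := fun t => ∑ σ, Φ (Z σ t))
    (Q := fun t => 1 / (2 * ρ * L) * ∑ σ, ‖gradient Φ (Z σ t)‖ ^ 2) hdescent
  rw [← Finset.mul_sum, one_div, inv_mul_le_iff₀ (by positivity), ← Finset.sum_sub_distrib]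
    at htel
  refine htel.trans (mul_le_mul_of_nonneg_left ?_ (by positivity))
  calc ∑ σ, (Φ (Z σ 0) - Φ (Z σ T)) ≤ ∑ _σ : Fin T → Fin N, (Φ z0 - φstar) :=
        Finset.sum_le_sum fun σ _ => sub_le_sub_left (hbound _) _
    _ = N ^ T * (Φ z0 - φstar) := by simp [mul_sub]

end Trajectory

theorem stmt6_general {n N : ℕ} (hN : 0 < N)
    (φ : Fin N → EuclideanSpace ℝ (Fin n) → ℝ) (hφj : ∀ j, Differentiable ℝ (φ j))
    (Φ : EuclideanSpace ℝ (Fin n) → ℝ) (hΦ : Φ = fun x => (1 / N : ℝ) * ∑ j, φ j x)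
    (L : ℝ) (hL : 0 < L)
    (hΦLip : ∀ x y, ‖gradient Φ x - gradient Φ y‖ ≤ L * ‖x - y‖)
    (φstar : ℝ) (hbound : ∀ x, φstar ≤ Φ x)
    (ρ : ℝ) (hρ : 0 < ρ)
    (hSGC : ∀ x, (1 / N : ℝ) * ∑ j, ‖gradient (φ j) x‖ ^ 2 ≤ ρ * ‖gradient Φ x‖ ^ 2)
    (z0 : EuclideanSpace ℝ (Fin n))
    (η : ℝ) (hη : η = 1 / (ρ * L))
    (ε : ℝ) (hε : 0 < ε)
    (T : ℕ)
    (hT : 2 * ρ * L * (Φ z0 - φstar) / ε ^ 2 ≤ (T : ℝ)) :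
    ((N : ℝ) ^ T)⁻¹ *
      ∑ σ : Fin T → Fin N, ((1 / T : ℝ) * ∑ t ∈ Finset.range T,
        ‖gradient Φ
          (sgdTraj φ η z0 (fun s => if h : s < T then σ ⟨s, h⟩ else ⟨0, hN⟩) t)‖) ≤
      ε := by
  -- `extendSeq ⟨0, hN⟩ σ` unfolds to the index sequence in the statement (used by the final `rfl`).
  set Z : (Fin T → Fin N) → ℕ → EuclideanSpace ℝ (Fin n) :=
    fun σ => sgdTraj φ η z0 (extendSeq ⟨0, hN⟩ σ)
  set P : Finset ((Fin T → Fin N) × ℕ) := univ ×ˢ range T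
  have hcard : (#P : ℝ) = N ^ T * T := by simp [P]
  have hsq : ∑ p ∈ P, ‖gradient Φ (Z p.1 p.2)‖ ^ 2 ≤ #P * ε ^ 2 := by
    rw [div_le_iff₀ (by positivity)] at hT
    rw [Finset.sum_product, Finset.sum_comm, hcard]
    calc _ ≤ 2 * ρ * L * (N ^ T * (Φ z0 - φstar)) :=
          sum_range_sum_norm_gradient_sgdTraj_sq_le hφj hΦ hL hΦLip hbound hρ hSGC hη _ T
      _ = N ^ T * (2 * ρ * L * (Φ z0 - φstar)) := by ring
      _ ≤ N ^ T * (T * ε ^ 2) := by gcongr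
      _ = N ^ T * T * ε ^ 2 := by ring
  calc _ = (#P : ℝ)⁻¹ * ∑ p ∈ P, ‖gradient Φ (Z p.1 p.2)‖ := by
        rw [hcard, Finset.sum_product, ← Finset.mul_sum, one_div, mul_inv, mul_assoc]
        rfl
    _ ≤ ε := inv_mul_le_of_le_mul₀ (by positivity) hε.le
        (Finset.sum_le_card_mul_of_sum_sq_le _ _ hε.le hsq)

theorem stmt6 {n N : ℕ} (hN : 0 < N)
    (φ : Fin N → EuclideanSpace ℝ (Fin n) → ℝ) (hφj : ∀ j, Differentiable ℝ (φ j))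
    (Φ : EuclideanSpace ℝ (Fin n) → ℝ) (hΦ : Φ = fun x => (1 / N : ℝ) * ∑ j, φ j x)
    (L : ℝ) (hL : 0 < L) (hΦsmooth : ContDiff ℝ 1 Φ)
    (hΦLip : ∀ x y, ‖gradient Φ x - gradient Φ y‖ ≤ L * ‖x - y‖)
    (φstar : ℝ) (hbound : ∀ x, φstar ≤ Φ x)
    (ρ : ℝ) (hρ : 0 < ρ)
    (hSGC : ∀ x, (1 / N : ℝ) * ∑ j, ‖gradient (φ j) x‖ ^ 2 ≤ ρ * ‖gradient Φ x‖ ^ 2)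
    (z0 : EuclideanSpace ℝ (Fin n))
    (η : ℝ) (hη : η = 1 / (ρ * L))
    (ε : ℝ) (hε : 0 < ε)
    (T : ℕ) (hTpos : 0 < T)
    (hT : 2 * ρ * L * (Φ z0 - φstar) / ε ^ 2 ≤ (T : ℝ)) :
    ((N : ℝ) ^ T)⁻¹ *
      ∑ σ : Fin T → Fin N, ((1 / T : ℝ) * ∑ t ∈ Finset.range T,
        ‖gradient Φ
          (sgdTraj φ η z0 (fun s => if h : s < T then σ ⟨s, h⟩ else ⟨0, hN⟩) t)‖) ≤
      ε :=
  stmt6_general hN φ hφj Φ hΦ L hL hΦLip φstar hbound ρ hρ hSGC z0 η hη ε hε T hT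
end

section
/- Let f : ℝⁿ → ℝ and g_i : ℝⁿ → ℝ, i = 1,…,m, be continuously differentiable, and for τ > 0 let P_τ(x) = f(x) + (τ/2)·Σ_{i=1}^m max(0, g_i(x))². Let (Ω, ℱ, ℙ) be a probability space, C ⊆ ℝⁿ a compact set, and x^k : Ω → ℝⁿ, k ∈ ℕ, measurable maps with x^k(ω) ∈ C for all k and ω. Let (τ_k) and (ε_k) be sequences with τ_k → ∞, ε_k → 0, and ∫ ‖∇P_{τ_k}(x^k)‖ dℙ ≤ ε_k for all k. Then: (i) ‖∇P_{τ_k}(x^k)‖ converges to 0 in probability; and (ii) there exists a strictly increasing sequence of indices (k_j) such that for ℙ-almost every ω there exist x̄ ∈ C and a subsequence of (x^{k_j}(ω)) converging to x̄ along which ‖∇P_{τ_{k_j}}(x^{k_j}(ω))‖ → 0; moreover, for any such limit point x̄ at which the E-LICQ holds, x̄ is feasible (g_i(x̄) ≤ 0 for all i) and x̄ is a KKT point of the problem min f(x) s.t. g_i(x) ≤ 0, i = 1,…,m. -/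
/-!
The `L¹` bound gives convergence in probability of the penalty gradients, hence an almost surely
convergent subsequence, and compactness of `C` supplies limit points. Along a sequence
`z → x̄` with `τ → ∞` the penalty gradient is `∇f + ∑ λᵢ ∇gᵢ` with `λᵢ = τ max(0, gᵢ)`. The
multipliers of constraints inactive at `x̄` vanish eventually; those of the active ones converge,
because a left inverse `L` of the injective map `c ↦ ∑ cᵢ ∇gᵢ(x̄)` makes `L ∘ (c ↦ ∑ cᵢ ∇gᵢ(z))`
close to the identity, hence invertible. The limits are KKT multipliers, and `x̄` is feasible
since a violated constraint would make its multiplier tend to infinity.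
-/

open Filter Topology MeasureTheory

section LinearAlgebra

variable {𝕜 : Type*} [NontriviallyNormedField 𝕜] [CompleteSpace 𝕜]
  {V F α : Type*} [NormedAddCommGroup V] [NormedSpace 𝕜 V] [FiniteDimensional 𝕜 V]
  [NormedAddCommGroup F] [NormedSpace 𝕜 F] [FiniteDimensional 𝕜 F] {l : Filter α} [l.NeBot]

theorem exists_tendsto_of_tendsto_apply_of_injective
    {A : α → V →L[𝕜] F} {A₀ : V →L[𝕜] F} {c : α → V} {w : F}
    (hA : Tendsto A l (𝓝 A₀)) (hA₀ : Function.Injective A₀)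
    (hc : Tendsto (fun a => A a (c a)) l (𝓝 w)) :
    ∃ c₀, Tendsto c l (𝓝 c₀) ∧ A₀ c₀ = w := by
  have := FiniteDimensional.complete 𝕜 V
  obtain ⟨L₀, hL₀⟩ :=
    (A₀ : V →ₗ[𝕜] F).exists_leftInverse_of_injective (LinearMap.ker_eq_bot.2 hA₀)
  set L : F →L[𝕜] V := L₀.toContinuousLinearMap
  have hLA₀ : L.comp A₀ = 1 := by
    ext1 v
    exact LinearMap.congr_fun hL₀ v
  have hB : Tendsto (fun a => L.comp (A a)) l (𝓝 1) :=
    hLA₀ ▸ ((ContinuousLinearMap.compL 𝕜 V F V L).continuous.tendsto A₀).comp hA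
  have hinv : Tendsto (fun a => Ring.inverse (L.comp (A a))) l (𝓝 1) := by
    simpa [Function.comp_def] using
      (NormedRing.inverse_continuousAt (1 : (V →L[𝕜] V)ˣ)).tendsto.comp hB
  -- eventually `L ∘ A a` is invertible, and then `c a = (L ∘ A a)⁻¹ (L (A a (c a)))`
  have hc₀ : Tendsto c l (𝓝 (L w)) := by
    have hlim : Tendsto (fun a => Ring.inverse (L.comp (A a)) (L (A a (c a)))) l
        (𝓝 ((1 : V →L[𝕜] V) (L w))) :=
      (isBoundedBilinearMap_apply.continuous.tendsto _).comp
        (hinv.prodMk_nhds ((L.continuous.tendsto w).comp hc))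
    refine hlim.congr' ?_
    filter_upwards [hB.eventually (Units.isOpen.mem_nhds isUnit_one)] with a ha
    exact congrArg (· (c a)) (Ring.inverse_mul_cancel _ ha)
  refine ⟨L w, hc₀, tendsto_nhds_unique ?_ hc⟩
  exact (isBoundedBilinearMap_apply.continuous.tendsto _).comp (hA.prodMk_nhds hc₀)

theorem exists_tendsto_of_tendsto_sum_smul_of_linearIndependent {ι : Type*} [Fintype ι]
    {v : α → ι → F} {v₀ : ι → F} {c : α → ι → 𝕜} {w : F}
    (hv : Tendsto v l (𝓝 v₀)) (hv₀ : LinearIndependent 𝕜 v₀)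
    (hc : Tendsto (fun a => ∑ i, c a i • v a i) l (𝓝 w)) :
    ∃ c₀, Tendsto c l (𝓝 c₀) ∧ ∑ i, c₀ i • v₀ i = w := by
  set Φ : (ι → F) → (ι → 𝕜) →L[𝕜] F :=
    fun u => ∑ i, (ContinuousLinearMap.proj i).smulRight (u i) with hΦ
  have hΦ_apply : ∀ u d, Φ u d = ∑ i, d i • u i := by simp [hΦ]
  have hΦ_cont : Continuous Φ := continuous_finsetSum _ fun i _ =>
    (ContinuousLinearMap.smulRightL 𝕜 (ι → 𝕜) F (ContinuousLinearMap.proj i)).continuous.comp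
      (continuous_apply i)
  have hinj : Function.Injective (Φ v₀) := by
    convert linearIndependent_iff_injective_fintypeLinearCombination.1 hv₀ using 1
    ext d
    simp [hΦ_apply, Fintype.linearCombination_apply]
  simp only [← hΦ_apply] at hc ⊢
  exact exists_tendsto_of_tendsto_apply_of_injective ((hΦ_cont.tendsto v₀).comp hv) hinj hc

end LinearAlgebra

theorem hasDerivAt_max_zero_sq (t : ℝ) :
    HasDerivAt (fun s : ℝ => max 0 s ^ 2) (2 * max 0 t) t := by
  refine hasDerivAt_of_hasDerivAt_of_ne' (f := fun s : ℝ => max 0 s ^ 2)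
    (g := fun s => 2 * max 0 s) (x := 0) (fun s hs => ?_) (by fun_prop) (by fun_prop) t
  rcases hs.lt_or_gt with hs | hs
  · rw [max_eq_left hs.le, mul_zero]
    refine (hasDerivAt_const s (0 : ℝ)).congr_of_eventuallyEq ?_
    filter_upwards [eventually_lt_nhds hs] with r hr
    simp [max_eq_left hr.le]
  · rw [max_eq_right hs.le]
    refine ((hasDerivAt_pow 2 s).congr_of_eventuallyEq ?_).congr_deriv (by ring)
    filter_upwards [eventually_gt_nhds hs] with r hr
    simp [max_eq_right hr.le]

section Penalty

variable {E ι : Type*}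

noncomputable def penalty [Fintype ι] (f : E → ℝ) (g : ι → E → ℝ) (τ : ℝ) (x : E) : ℝ :=
  f x + (τ / 2) * ∑ i, max 0 (g i x) ^ 2

def penaltyMultipliers (g : ι → E → ℝ) (τ : ℝ) (x : E) (i : ι) : ℝ :=
  τ * max 0 (g i x)

theorem eventually_penaltyMultipliers_eq_zero {α : Type*} [TopologicalSpace E] {l : Filter α}
    {g : ι → E → ℝ} {t : α → ℝ} {z : α → E} {x : E} {i : ι} (hgi : ContinuousAt (g i) x)
    (hz : Tendsto z l (𝓝 x)) (hi : g i x < 0) :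
    ∀ᶠ a in l, penaltyMultipliers g (t a) (z a) i = 0 := by
  filter_upwards [(hgi.tendsto.comp hz).eventually (eventually_lt_nhds hi)] with a ha
  simp [penaltyMultipliers, max_eq_left (le_of_lt ha : g i (z a) ≤ 0)]

end Penalty

section Gradient

variable {E ι : Type*} [NormedAddCommGroup E] [InnerProductSpace ℝ E] [CompleteSpace E]
  [Fintype ι] {f : E → ℝ} {g : ι → E → ℝ}

def IsKKTPoint (f : E → ℝ) (g : ι → E → ℝ) (x : E) : Prop :=
  (∀ i, g i x ≤ 0) ∧ ∃ lam : ι → ℝ, (∀ i, 0 ≤ lam i) ∧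
    gradient f x + ∑ i, lam i • gradient (g i) x = 0 ∧ ∀ i, lam i * g i x = 0

theorem ContDiff.continuous_gradient (hf : ContDiff ℝ 1 f) : Continuous (gradient f) :=
  (InnerProductSpace.toDual ℝ E).symm.continuous.comp (hf.continuous_fderiv one_ne_zero)

theorem hasGradientAt_penalty {x : E} (hf : DifferentiableAt ℝ f x)
    (hg : ∀ i, DifferentiableAt ℝ (g i) x) (τ : ℝ) :
    HasGradientAt (penalty f g τ)
      (gradient f x + ∑ i, penaltyMultipliers g τ x i • gradient (g i) x) x := by
  have hsq : ∀ i, HasFDerivAt (fun y => max 0 (g i y) ^ 2)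
      ((2 * max 0 (g i x)) • InnerProductSpace.toDual ℝ E (gradient (g i) x)) x := fun i =>
    (hasDerivAt_max_zero_sq _).comp_hasFDerivAt x (hg i).hasGradientAt.hasFDerivAt
  have hP : HasFDerivAt (penalty f g τ) (InnerProductSpace.toDual ℝ E (gradient f x) +
      (τ / 2) • ∑ i, (2 * max 0 (g i x)) • InnerProductSpace.toDual ℝ E (gradient (g i) x)) x :=
    hf.hasGradientAt.hasFDerivAt.add
      ((HasFDerivAt.fun_sum (u := Finset.univ) fun i _ => hsq i).const_mul (τ / 2))
  rw [hasGradientAt_iff_hasFDerivAt]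
  refine hP.congr_fderiv ?_
  simp only [map_add, map_sum, map_smul, Finset.smul_sum, smul_smul, penaltyMultipliers]
  congr 1
  exact Finset.sum_congr rfl fun i _ => by congr 1; ring

theorem gradient_penalty (hf : ContDiff ℝ 1 f) (hg : ∀ i, ContDiff ℝ 1 (g i)) (τ : ℝ) :
    gradient (penalty f g τ)
      = fun x => gradient f x + ∑ i, penaltyMultipliers g τ x i • gradient (g i) x :=
  gradient_eq fun x => hasGradientAt_penalty (hf.differentiable one_ne_zero x)
    (fun i => (hg i).differentiable one_ne_zero x) τ

theorem continuous_gradient_penalty (hf : ContDiff ℝ 1 f) (hg : ∀ i, ContDiff ℝ 1 (g i))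
    (τ : ℝ) : Continuous (gradient (penalty f g τ)) := by
  have hf' := hf.continuous_gradient
  have hg' := fun i => (hg i).continuous_gradient
  have hg_cont := fun i => (hg i).continuous
  rw [gradient_penalty hf hg]
  unfold penaltyMultipliers
  fun_prop

theorem tendsto_penaltyMultipliers [FiniteDimensional ℝ E] {α : Type*} {l : Filter α}
    [l.NeBot] (hf : ContDiff ℝ 1 f) (hg : ∀ i, ContDiff ℝ 1 (g i)) {t : α → ℝ} {z : α → E}
    {x : E} (hz : Tendsto z l (𝓝 x))
    (hgrad : Tendsto (fun a => gradient (penalty f g (t a)) (z a)) l (𝓝 0))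
    (hLI : LinearIndependent ℝ (fun i : {i // 0 ≤ g i x} => gradient (g i.1) x)) :
    ∃ lam : ι → ℝ, Tendsto (fun a => penaltyMultipliers g (t a) (z a)) l (𝓝 lam) := by
  set mult := fun a => penaltyMultipliers g (t a) (z a)
  have hinactive : ∀ i, ¬ 0 ≤ g i x → ∀ᶠ a in l, mult a i = 0 := fun i hi =>
    eventually_penaltyMultipliers_eq_zero (hg i).continuous.continuousAt hz (not_le.1 hi)
  have hactive : ∀ᶠ a in l, ∑ i : {i // 0 ≤ g i x}, mult a i • gradient (g i) (z a)
      = gradient (penalty f g (t a)) (z a) - gradient f (z a) := by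
    filter_upwards [eventually_all.2 fun i : {i // ¬ 0 ≤ g i x} => hinactive i i.2] with a ha
    rw [gradient_penalty hf hg, add_sub_cancel_left,
      ← Fintype.sum_subtype_add_sum_subtype (fun i => 0 ≤ g i x)]
    simp [mult, ha]
  have hv : Tendsto (fun a (i : {i // 0 ≤ g i x}) => gradient (g i) (z a)) l
      (𝓝 fun i => gradient (g i) x) :=
    tendsto_pi_nhds.2 fun i => ((hg i).continuous_gradient.tendsto x).comp hz
  obtain ⟨c₀, hc₀, -⟩ := exists_tendsto_of_tendsto_sum_smul_of_linearIndependent hv hLI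
    ((hgrad.sub ((hf.continuous_gradient.tendsto x).comp hz)).congr'
      (hactive.mono fun a ha => ha.symm))
  refine ⟨fun i => if h : 0 ≤ g i x then c₀ ⟨i, h⟩ else 0, tendsto_pi_nhds.2 fun i => ?_⟩
  split_ifs with h
  · exact tendsto_pi_nhds.1 hc₀ ⟨i, h⟩
  · exact tendsto_const_nhds.congr' (EventuallyEq.symm (hinactive i h))

theorem isKKTPoint_of_tendsto_gradient_penalty [FiniteDimensional ℝ E] {α : Type*}
    {l : Filter α} [l.NeBot] (hf : ContDiff ℝ 1 f) (hg : ∀ i, ContDiff ℝ 1 (g i))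
    {t : α → ℝ} {z : α → E} {x : E} (ht : Tendsto t l atTop) (hz : Tendsto z l (𝓝 x))
    (hgrad : Tendsto (fun a => gradient (penalty f g (t a)) (z a)) l (𝓝 0))
    (hLI : LinearIndependent ℝ (fun i : {i // 0 ≤ g i x} => gradient (g i.1) x)) :
    IsKKTPoint f g x := by
  obtain ⟨lam, hlam⟩ := tendsto_penaltyMultipliers hf hg hz hgrad hLI
  have hlam_i := tendsto_pi_nhds.1 hlam
  have hgz : ∀ i, Tendsto (fun a => g i (z a)) l (𝓝 (g i x)) := fun i =>
    ((hg i).continuous.tendsto x).comp hz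
  have hfeas : ∀ i, g i x ≤ 0 := by
    intro i
    by_contra! hi
    have hmax : Tendsto (fun a => max 0 (g i (z a))) l (𝓝 (g i x)) := by
      simpa [max_eq_right hi.le] using (tendsto_const_nhds (x := (0 : ℝ))).max (hgz i)
    exact not_tendsto_nhds_of_tendsto_atTop (ht.atTop_mul_pos hi hmax) _ (hlam_i i)
  refine ⟨hfeas, lam, fun i => ?_, ?_, fun i => ?_⟩
  · refine ge_of_tendsto (hlam_i i) ?_
    filter_upwards [ht.eventually_ge_atTop 0] with a ha
    exact mul_nonneg ha (le_max_left _ _)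
  · refine tendsto_nhds_unique ?_ hgrad
    simp only [gradient_penalty hf hg]
    exact ((hf.continuous_gradient.tendsto x).comp hz).add (tendsto_finsetSum _ fun i _ =>
      (hlam_i i).smul (((hg i).continuous_gradient.tendsto x).comp hz))
  · rcases (hfeas i).lt_or_eq with hi | hi
    · have hzero : lam i = 0 := tendsto_nhds_unique (hlam_i i) (tendsto_const_nhds.congr'
        (EventuallyEq.symm (eventually_penaltyMultipliers_eq_zero
          (hg i).continuous.continuousAt hz hi)))
      simp [hzero]
    · simp [hi]

end Gradient

theorem tendstoInMeasure_of_integral_norm_le {Ω F α : Type*} [MeasurableSpace Ω]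
    {μ : Measure Ω} [NormedAddCommGroup F] {l : Filter α} {X : α → Ω → F} {ε : α → ℝ}
    (hX : ∀ a, Integrable (X a) μ) (hε : Tendsto ε l (𝓝 0))
    (hXε : ∀ a, ∫ ω, ‖X a ω‖ ∂μ ≤ ε a) : TendstoInMeasure μ X l 0 := by
  refine tendstoInMeasure_of_tendsto_eLpNorm one_ne_zero (fun a => (hX a).aestronglyMeasurable)
    aestronglyMeasurable_const ?_
  have hε' : Tendsto (fun a => ENNReal.ofReal (ε a)) l (𝓝 0) := by
    simpa using ENNReal.tendsto_ofReal hε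
  refine tendsto_of_tendsto_of_tendsto_of_le_of_le tendsto_const_nhds hε' (fun _ => zero_le)
    fun a => ?_
  rw [sub_zero, eLpNorm_one_eq_lintegral_enorm, ← ofReal_integral_norm_eq_lintegral_enorm (hX a)]
  exact ENNReal.ofReal_le_ofReal (hXε a)

theorem Continuous.integrable_comp_of_forall_mem {Ω E F : Type*} [MeasurableSpace Ω]
    {μ : Measure Ω} [IsFiniteMeasure μ] [TopologicalSpace E] [MeasurableSpace E]
    [OpensMeasurableSpace E] [SecondCountableTopology E]
    [TopologicalSpace.PseudoMetrizableSpace E]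
    [NormedAddCommGroup F] {φ : E → F} {X : Ω → E} {K : Set E}
    (hφ : Continuous φ) (hX : Measurable X) (hK : IsCompact K) (hXK : ∀ ω, X ω ∈ K) :
    Integrable (fun ω => φ (X ω)) μ := by
  obtain ⟨C, hC⟩ := hK.exists_bound_of_continuousOn hφ.continuousOn
  exact .of_bound (hφ.comp_aestronglyMeasurable hX.aestronglyMeasurable) C
    (ae_of_all _ fun ω => hC _ (hXK ω))

theorem stmt13_general {n m : ℕ} (f : EuclideanSpace ℝ (Fin n) → ℝ)
    (g : Fin m → EuclideanSpace ℝ (Fin n) → ℝ)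
    (hf : ContDiff ℝ 1 f) (hg : ∀ i, ContDiff ℝ 1 (g i))
    (P : ℝ → EuclideanSpace ℝ (Fin n) → ℝ)
    (hP : P = fun τ x => f x + (τ / 2) * ∑ i, max 0 (g i x) ^ 2)
    {Ω : Type*} [MeasurableSpace Ω] (ℙ : Measure Ω) [IsProbabilityMeasure ℙ]
    (C : Set (EuclideanSpace ℝ (Fin n))) (hCcompact : IsCompact C)
    (x : ℕ → Ω → EuclideanSpace ℝ (Fin n)) (hxmeas : ∀ k, Measurable (x k))
    (hxC : ∀ k ω, x k ω ∈ C)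
    (τ : ℕ → ℝ) (hτ : Tendsto τ atTop atTop)
    (ε : ℕ → ℝ) (hε : Tendsto ε atTop (nhds 0))
    (hint : ∀ k, ∫ ω, ‖gradient (P (τ k)) (x k ω)‖ ∂ℙ ≤ ε k) :
    (∀ η > (0 : ℝ),
      Tendsto (fun k => ℙ {ω | ‖gradient (P (τ k)) (x k ω)‖ > η}) atTop (nhds 0)) ∧
    ∃ ks : ℕ → ℕ, StrictMono ks ∧
      ∀ᵐ ω ∂ℙ,
        (∃ xbar ∈ C, ∃ s : ℕ → ℕ, StrictMono s ∧
          Tendsto (fun j => x (ks (s j)) ω) atTop (nhds xbar) ∧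
          Tendsto (fun j => ‖gradient (P (τ (ks (s j)))) (x (ks (s j)) ω)‖)
            atTop (nhds 0)) ∧
        (∀ xbar ∈ C,
          (∃ s : ℕ → ℕ, StrictMono s ∧
            Tendsto (fun j => x (ks (s j)) ω) atTop (nhds xbar) ∧
            Tendsto (fun j => ‖gradient (P (τ (ks (s j)))) (x (ks (s j)) ω)‖)
              atTop (nhds 0)) →
          LinearIndependent ℝ
            (fun i : {i : Fin m // 0 ≤ g i xbar} => gradient (g i.1) xbar) →
          (∀ i, g i xbar ≤ 0) ∧
          ∃ lam : Fin m → ℝ,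
            (∀ i, 0 ≤ lam i) ∧
            gradient f xbar + ∑ i, lam i • gradient (g i) xbar = 0 ∧
            (∀ i, lam i * g i xbar = 0)) := by
  obtain rfl : P = penalty f g := hP
  have hX : TendstoInMeasure ℙ (fun k ω => gradient (penalty f g (τ k)) (x k ω)) atTop 0 :=
    tendstoInMeasure_of_integral_norm_le (fun k =>
      (continuous_gradient_penalty hf hg (τ k)).integrable_comp_of_forall_mem (hxmeas k)
        hCcompact (hxC k)) hε hint
  refine ⟨fun η hη => ?_, ?_⟩
  · refine tendsto_of_tendsto_of_tendsto_of_le_of_le tendsto_const_nhds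
      (tendstoInMeasure_iff_dist.1 hX η hη) (fun _ => zero_le)
      fun k => measure_mono fun ω hω => ?_
    simpa using le_of_lt hω
  · obtain ⟨ks, hks, hae⟩ := hX.exists_seq_tendsto_ae
    refine ⟨ks, hks, hae.mono fun ω hω => ⟨?_, ?_⟩⟩
    · obtain ⟨xbar, hxbar, s, hs, hconv⟩ := hCcompact.tendsto_subseq fun j => hxC (ks j) ω
      exact ⟨xbar, hxbar, s, hs, hconv,
        (tendsto_zero_iff_norm_tendsto_zero.1 hω).comp hs.tendsto_atTop⟩
    · rintro xbar - ⟨s, hs, hconv, hgrad⟩ hLI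
      exact isKKTPoint_of_tendsto_gradient_penalty hf hg (hτ.comp (hks.comp hs).tendsto_atTop)
        hconv (tendsto_zero_iff_norm_tendsto_zero.2 hgrad) hLI

theorem stmt13 {n m : ℕ} (f : EuclideanSpace ℝ (Fin n) → ℝ)
    (g : Fin m → EuclideanSpace ℝ (Fin n) → ℝ)
    (hf : ContDiff ℝ 1 f) (hg : ∀ i, ContDiff ℝ 1 (g i))
    (P : ℝ → EuclideanSpace ℝ (Fin n) → ℝ)
    (hP : P = fun τ x => f x + (τ / 2) * ∑ i, max 0 (g i x) ^ 2)
    {Ω : Type*} [MeasurableSpace Ω] (ℙ : Measure Ω) [IsProbabilityMeasure ℙ]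
    (C : Set (EuclideanSpace ℝ (Fin n))) (hCcompact : IsCompact C)
    (x : ℕ → Ω → EuclideanSpace ℝ (Fin n)) (hxmeas : ∀ k, Measurable (x k))
    (hxC : ∀ k ω, x k ω ∈ C)
    (τ : ℕ → ℝ) (hτpos : ∀ k, 0 < τ k) (hτ : Tendsto τ atTop atTop)
    (ε : ℕ → ℝ) (hε : Tendsto ε atTop (nhds 0))
    (hint : ∀ k, ∫ ω, ‖gradient (P (τ k)) (x k ω)‖ ∂ℙ ≤ ε k) :
    (∀ η > (0 : ℝ),
      Tendsto (fun k => ℙ {ω | ‖gradient (P (τ k)) (x k ω)‖ > η}) atTop (nhds 0)) ∧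
    ∃ ks : ℕ → ℕ, StrictMono ks ∧
      ∀ᵐ ω ∂ℙ,
        (∃ xbar ∈ C, ∃ s : ℕ → ℕ, StrictMono s ∧
          Tendsto (fun j => x (ks (s j)) ω) atTop (nhds xbar) ∧
          Tendsto (fun j => ‖gradient (P (τ (ks (s j)))) (x (ks (s j)) ω)‖)
            atTop (nhds 0)) ∧
        (∀ xbar ∈ C,
          (∃ s : ℕ → ℕ, StrictMono s ∧
            Tendsto (fun j => x (ks (s j)) ω) atTop (nhds xbar) ∧
            Tendsto (fun j => ‖gradient (P (τ (ks (s j)))) (x (ks (s j)) ω)‖)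
              atTop (nhds 0)) →
          LinearIndependent ℝ
            (fun i : {i : Fin m // 0 ≤ g i xbar} => gradient (g i.1) xbar) →
          (∀ i, g i xbar ≤ 0) ∧
          ∃ lam : Fin m → ℝ,
            (∀ i, 0 ≤ lam i) ∧
            gradient f xbar + ∑ i, lam i • gradient (g i) xbar = 0 ∧
            (∀ i, lam i * g i xbar = 0)) :=
  stmt13_general f g hf hg P hP ℙ C hCcompact x hxmeas hxC τ hτ ε hε hint
end
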